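/- arXiv:2504.04690 — 3 statements merged into one kernel-verified Lean document; each statement's English description precedes it below -/
import Mathlib

section
/- Assume ∫_τ^∞ ds/r(s) = ∞; that for some ε > 0 both ∫_ε^∞ du/φ(u) < ∞ and ∫_{−∞}^{−ε} du/(−φ(u)) < ∞; that ∫_τ^∞ p(u) du < ∞; and that Σ_{j=0}^∞ ∫_{t_j}^{ζ_j} (1/r(s))·(∫_{t_{j+1}}^∞ p(u) du) ds = ∞. Then every solution x of (E) is oscillatory. -/
open MeasureTheory Set Filter

/-!
If `x` were eventually positive, then on each `(t k, t (k + 1))` the function `r x'` has derivative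
`-f(s, x(ζ k)) ≤ 0`, so `r x'` is eventually nonincreasing. It cannot become negative: then
`x' ≤ -c / r`, and `∫ 1/r = ∞` would drive `x` to `-∞`. So `x` is eventually nondecreasing, and
`r x' + φ(x(ζ j)) ∫_{t (j+1)}^s p` is again nonincreasing in `s`; letting `s → ∞` gives
`r x' ≥ φ(x(ζ j)) ∫_{t (j+1)}^∞ p` on `[t j, ζ j]`. Integrating `x' / φ(x(ζ j))` over
`[t j, ζ j]` then bounds the `j`-th term of the divergent series by
`∫_{x(t j)}^{x(ζ j)} du / φ(u)`. These intervals are disjoint, so the tail of the series is at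
most `∫_{x(t K)}^∞ du / φ(u) < ∞`, a contradiction.
Eventually negative solutions reduce to this case through `x ↦ -x`, `f(s, y) ↦ -f(s, -y)`,
`φ(y) ↦ -φ(-y)`.
-/

theorem antitoneOn_Ici_of_antitoneOn_Icc_succ {t : ℕ → ℝ} (ht_mono : Monotone t)
    (ht_top : Tendsto t atTop atTop) {g : ℝ → ℝ} {K : ℕ}
    (hg : ∀ k, K ≤ k → AntitoneOn g (Icc (t k) (t (k + 1)))) :
    AntitoneOn g (Ici (t K)) := by
  have hIcc : ∀ n, AntitoneOn g (Icc (t K) (t (K + n))) := by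
    intro n
    induction n with
    | zero => simp [AntitoneOn]
    | succ n ih =>
      change AntitoneOn g (Icc (t K) (t (K + n + 1)))
      rw [← Icc_union_Icc_eq_Icc (ht_mono (Nat.le_add_right K n)) (ht_mono (Nat.le_succ _))]
      exact ih.union_right (hg _ (Nat.le_add_right K n))
        (isGreatest_Icc (ht_mono (Nat.le_add_right K n))) (isLeast_Icc (ht_mono (Nat.le_succ _)))
  intro u hu v hv huv
  obtain ⟨N, hN⟩ := (ht_top.eventually_ge_atTop v).exists
  exact hIcc N ⟨hu, huv.trans (hN.trans (ht_mono (Nat.le_add_left N K)))⟩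
    ⟨hv, hN.trans (ht_mono (Nat.le_add_left N K))⟩ huv

theorem antitoneOn_Ici_of_hasDerivAt_nonpos {t : ℕ → ℝ} (ht_mono : Monotone t)
    (ht_top : Tendsto t atTop atTop) {g : ℝ → ℝ} {K : ℕ} (hg : ContinuousOn g (Ici (t K)))
    (hg' : ∀ k, K ≤ k → ∀ s ∈ Ioo (t k) (t (k + 1)), ∃ d ≤ 0, HasDerivAt g d s) :
    AntitoneOn g (Ici (t K)) := by
  refine antitoneOn_Ici_of_antitoneOn_Icc_succ ht_mono ht_top fun k hk => ?_
  refine antitoneOn_of_hasDerivWithinAt_nonpos (f' := deriv g) (convex_Icc _ _)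
    (hg.mono fun s hs => (ht_mono hk).trans hs.1) (fun s hs => ?_) (fun s hs => ?_) <;>
    rw [interior_Icc] at hs <;> obtain ⟨d, hd, hgd⟩ := hg' k hk s hs
  · exact hgd.differentiableAt.hasDerivAt.hasDerivWithinAt
  · exact hgd.deriv ▸ hd

theorem ContinuousOn.continuousOn_primitive_Ici {p : ℝ → ℝ} {a : ℝ}
    (hp : ContinuousOn p (Ici a)) : ContinuousOn (fun u => ∫ v in a..u, p v) (Ici a) := by
  intro s hs
  have has : a ≤ s + 1 := by linarith [mem_Ici.1 hs]
  have hIcc := intervalIntegral.continuousOn_primitive_interval' (μ := volume)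
    ((hp.mono Icc_subset_Ici_self).intervalIntegrable_of_Icc has) left_mem_uIcc
  rw [uIcc_of_le has] at hIcc
  refine (hIcc s ⟨hs, by linarith⟩).mono_of_mem_nhdsWithin ?_
  rw [← Ici_inter_Iic]
  exact inter_mem_nhdsWithin _ (Iic_mem_nhds (lt_add_one s))

theorem ContinuousOn.hasDerivAt_primitive {p : ℝ → ℝ} {a b s : ℝ}
    (hp : ContinuousOn p (Ici a)) (hb : a ≤ b) (hs : a < s) :
    HasDerivAt (fun u => ∫ v in b..u, p v) (p s) s :=
  intervalIntegral.integral_hasDerivAt_right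
    (hp.mono fun _ hy => (le_min hb hs.le).trans hy.1).intervalIntegrable
    (hp.mono Ioi_subset_Ici_self |>.stronglyMeasurableAtFilter isOpen_Ioi s hs)
    (hp.continuousAt (Ici_mem_nhds hs))

theorem tendsto_intervalIntegral_atTop_of_lintegral_Ioi_eq_top {g : ℝ → ℝ} {a c : ℝ}
    (hg : ContinuousOn g (Ici a)) (hg0 : ∀ s ∈ Ici a, 0 ≤ g s)
    (h : ∫⁻ s in Ioi a, ENNReal.ofReal (g s) = ⊤) (hac : a ≤ c) :
    Tendsto (fun b => ∫ s in c..b, g s) atTop atTop := by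
  have hint : ∀ b, a ≤ b → IntervalIntegrable g volume a b := fun b hb =>
    (hg.mono Icc_subset_Ici_self).intervalIntegrable_of_Icc hb
  have hlint : Tendsto (fun b => ∫⁻ s in Ioc a b, ENNReal.ofReal (g s)) atTop (nhds ⊤) := by
    have := tendsto_measure_iUnion_atTop (μ := volume.withDensity fun s => ENNReal.ofReal (g s))
      (antitone_const.Ioc monotone_id : Monotone fun b => Ioc a b)
    simpa only [Function.comp_def, withDensity_apply _ measurableSet_Ioc, iUnion_Ioc_right,
      withDensity_apply _ measurableSet_Ioi, h] using this
  have hfrom_a : Tendsto (fun b => ∫ s in a..b, g s) atTop atTop := by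
    refine tendsto_atTop.2 fun M => ?_
    filter_upwards [hlint.eventually_const_lt (ENNReal.ofReal_lt_top (r := M)),
      eventually_ge_atTop a] with b hb hab
    rw [intervalIntegral.integral_of_le hab]
    rw [← ofReal_integral_eq_lintegral_ofReal (hint b hab).1
      (ae_restrict_of_forall_mem measurableSet_Ioc fun s hs => hg0 s (le_of_lt hs.1))] at hb
    exact (ENNReal.ofReal_lt_ofReal_iff'.1 hb).1.le
  refine (hfrom_a.atTop_add (tendsto_const_nhds (x := -∫ s in a..c, g s))).congr' ?_
  filter_upwards [eventually_ge_atTop a] with b hb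
  rw [← intervalIntegral.integral_interval_sub_left (hint b hb) (hint c hac)]
  ring

theorem tendsto_atBot_of_mul_deriv_le_neg {r x x' : ℝ → ℝ} {a c : ℝ}
    (hr_cont : ContinuousOn r (Ici a)) (hr_pos : ∀ s ∈ Ici a, 0 < r s)
    (hr_int : Tendsto (fun b => ∫ s in a..b, 1 / r s) atTop atTop)
    (hx : ∀ s ∈ Ici a, HasDerivAt x (x' s) s) (hx' : ContinuousOn x' (Ici a))
    (hc : 0 < c) (hle : ∀ s ∈ Ici a, r s * x' s ≤ -c) : Tendsto x atTop atBot := by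
  have hbound : ∀ b, a ≤ b → x b ≤ x a + -c * ∫ s in a..b, 1 / r s := by
    intro b hab
    have hsub : Icc a b ⊆ Ici a := Icc_subset_Ici_self
    have hFTC := intervalIntegral.integral_eq_sub_of_hasDerivAt
      (fun s hs => hx s (hsub (uIcc_of_le hab ▸ hs)))
      ((hx'.mono hsub).intervalIntegrable_of_Icc hab)
    have hmono : ∫ s in a..b, x' s ≤ ∫ s in a..b, -c * (1 / r s) :=
      intervalIntegral.integral_mono_on hab ((hx'.mono hsub).intervalIntegrable_of_Icc hab)
        (((continuousOn_const.div hr_cont fun s hs => (hr_pos s hs).ne').mono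
          hsub).intervalIntegrable_of_Icc hab |>.const_mul _)
        fun s hs => by
          have hrs := hr_pos s (hsub hs)
          rw [← div_eq_mul_one_div, le_div_iff₀ hrs, mul_comm]
          exact hle s (hsub hs)
    rw [intervalIntegral.integral_const_mul] at hmono
    linarith
  refine tendsto_atBot_mono' _ ((eventually_ge_atTop a).mono hbound) ?_
  exact tendsto_atBot_add_const_left _ _ (tendsto_neg_atTop_atBot.comp (hr_int.const_mul_atTop hc)
    |>.congr fun b => by simp)

theorem mul_integral_Ioi_le_of_antitoneOn {g p : ℝ → ℝ} {a c : ℝ} (hp : IntegrableOn p (Ioi a))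
    (hg : ∀ s ∈ Ici a, 0 ≤ g s)
    (hanti : AntitoneOn (fun s => g s + c * ∫ u in a..s, p u) (Ici a)) :
    c * ∫ u in Ioi a, p u ≤ g a := by
  refine le_of_tendsto ((intervalIntegral_tendsto_integral_Ioi a hp tendsto_id).const_mul c) ?_
  filter_upwards [eventually_ge_atTop a] with s hs
  have := hanti self_mem_Ici hs hs
  simp only [intervalIntegral.integral_same, mul_zero, add_zero] at this
  change c * ∫ u in a..s, p u ≤ g a
  linarith [hg s hs]

theorem integral_one_div_mul_le_sub_div {r x x' : ℝ → ℝ} {a b c Q : ℝ} (hab : a ≤ b)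
    (hr_cont : ContinuousOn r (Icc a b)) (hr_pos : ∀ s ∈ Icc a b, 0 < r s)
    (hx : ∀ s ∈ Icc a b, HasDerivAt x (x' s) s) (hx' : ContinuousOn x' (Icc a b)) (hc : 0 < c)
    (hle : ∀ s ∈ Icc a b, c * Q ≤ r s * x' s) :
    ∫ s in a..b, 1 / r s * Q ≤ (x b - x a) / c := by
  have hmono : ∫ s in a..b, 1 / r s * Q ≤ ∫ s in a..b, x' s / c :=
    intervalIntegral.integral_mono_on hab
      (((continuousOn_const.div hr_cont fun s hs => (hr_pos s hs).ne').mul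
        continuousOn_const).intervalIntegrable_of_Icc hab)
      ((hx'.div_const c).intervalIntegrable_of_Icc hab)
      fun s hs => by
        rw [one_div_mul_eq_div, div_le_div_iff₀ (hr_pos s hs) hc]
        linarith [hle s hs]
  rwa [intervalIntegral.integral_div, intervalIntegral.integral_eq_sub_of_hasDerivAt
    (fun s hs => hx s (uIcc_of_le hab ▸ hs)) (hx'.intervalIntegrable_of_Icc hab)] at hmono

theorem ofReal_sub_div_le_lintegral_Ioc {φ : ℝ → ℝ} (hφ : Monotone φ) {a b : ℝ} (hab : a ≤ b)
    (ha : 0 < φ a) : ENNReal.ofReal ((b - a) / φ b) ≤ ∫⁻ u in Ioc a b, ENNReal.ofReal (1 / φ u) :=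
  calc ENNReal.ofReal ((b - a) / φ b)
      = ∫⁻ _ in Ioc a b, ENNReal.ofReal (1 / φ b) := by
        rw [setLIntegral_const, Real.volume_Ioc, ← ENNReal.ofReal_mul (by
          have := ha.trans_le (hφ hab); positivity), one_div_mul_eq_div]
    _ ≤ ∫⁻ u in Ioc a b, ENNReal.ofReal (1 / φ u) :=
        setLIntegral_mono (measurable_const.div hφ.measurable).ennreal_ofReal fun u hu =>
          ENNReal.ofReal_le_ofReal (one_div_le_one_div_of_le (ha.trans_le (hφ hu.1.le)) (hφ hu.2))

theorem tsum_setLIntegral_Ioc_le_setLIntegral_Ioi {a b : ℕ → ℝ} (ha : Monotone a)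
    (hb : ∀ i, b i ≤ a (i + 1)) (F : ℝ → ENNReal) :
    ∑' i, ∫⁻ u in Ioc (a i) (b i), F u ≤ ∫⁻ u in Ioi (a 0), F u :=
  calc ∑' i, ∫⁻ u in Ioc (a i) (b i), F u
      ≤ ∑' i, ∫⁻ u in Ioc (a i) (a (i + 1)), F u :=
        ENNReal.tsum_le_tsum fun i => lintegral_mono_set (Ioc_subset_Ioc_right (hb i))
    _ = ∫⁻ u in ⋃ i, Ioc (a i) (a (i + 1)), F u :=
        (lintegral_iUnion (fun _ => measurableSet_Ioc) ha.pairwise_disjoint_on_Ioc_succ F).symm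
    _ ≤ ∫⁻ u in Ioi (a 0), F u :=
        lintegral_mono_set (iUnion_subset fun i => Ioc_subset_Ioi_self.trans
          (Ioi_subset_Ioi (ha (Nat.zero_le i))))

theorem lintegral_Ioi_one_div_lt_top {φ : ℝ → ℝ} (hφ : Monotone φ) {m ε : ℝ} (hm : 0 < φ m)
    (hε : ∫⁻ u in Ioi ε, ENNReal.ofReal (1 / φ u) < ⊤) :
    ∫⁻ u in Ioi m, ENNReal.ofReal (1 / φ u) < ⊤ := by
  have hhead : ∫⁻ u in Ioc m (max m ε), ENNReal.ofReal (1 / φ u)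
      ≤ ∫⁻ _ in Ioc m (max m ε), ENNReal.ofReal (1 / φ m) :=
    setLIntegral_mono measurable_const fun u hu =>
      ENNReal.ofReal_le_ofReal (one_div_le_one_div_of_le hm (hφ hu.1.le))
  calc ∫⁻ u in Ioi m, ENNReal.ofReal (1 / φ u)
      ≤ ∫⁻ u in Ioc m (max m ε) ∪ Ioi ε, ENNReal.ofReal (1 / φ u) := by
        refine lintegral_mono_set fun u hu => ?_
        rcases le_or_gt u (max m ε) with h | h
        · exact Or.inl ⟨hu, h⟩
        · exact Or.inr ((le_max_right m ε).trans_lt h)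
    _ ≤ (∫⁻ u in Ioc m (max m ε), ENNReal.ofReal (1 / φ u))
          + ∫⁻ u in Ioi ε, ENNReal.ofReal (1 / φ u) := lintegral_union_le _ _ _
    _ < ⊤ := by
        refine ENNReal.add_lt_top.2 ⟨hhead.trans_lt ?_, hε⟩
        rw [setLIntegral_const, Real.volume_Ioc]
        exact ENNReal.mul_lt_top ENNReal.ofReal_lt_top ENNReal.ofReal_lt_top

theorem lintegral_Ioi_comp_neg (g : ℝ → ENNReal) (c : ℝ) :
    ∫⁻ u in Ioi c, g (-u) = ∫⁻ u in Iio (-c), g u := by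
  have h := (Measure.measurePreserving_neg (volume : Measure ℝ)).setLIntegral_comp_preimage_emb
    measurableEmbedding_neg g (Iio (-c))
  rwa [show (Neg.neg : ℝ → ℝ) ⁻¹' Iio (-c) = Ioi c by ext u; simp] at h

/-- `x` solves `(r x')' + f(s, x(γ s)) = 0` on `[t 0, ∞)`, where `γ = ζ k` on `[t k, t (k + 1))`. -/
structure IsDEPCAGSolution (t ζ : ℕ → ℝ) (r : ℝ → ℝ) (f : ℝ → ℝ → ℝ) (x x' : ℝ → ℝ) : Prop where
  hasDerivAt : ∀ s ∈ Ici (t 0), HasDerivAt x (x' s) s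
  continuousOn_deriv : ContinuousOn x' (Ici (t 0))
  hasDerivAt_mul_deriv : ∀ k, ∀ s ∈ Ioo (t k) (t (k + 1)),
    HasDerivAt (fun u => r u * x' u) (-f s (x (ζ k))) s

namespace IsDEPCAGSolution

variable {t ζ : ℕ → ℝ} {r p φ : ℝ → ℝ} {f : ℝ → ℝ → ℝ} {x x' : ℝ → ℝ}

theorem neg (hx : IsDEPCAGSolution t ζ r f x x') :
    IsDEPCAGSolution t ζ r (fun s y => -f s (-y)) (-x) (-x') where
  hasDerivAt s hs := (hx.hasDerivAt s hs).neg
  continuousOn_deriv := hx.continuousOn_deriv.neg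
  hasDerivAt_mul_deriv k s hs := by
    simpa only [Pi.neg_apply, mul_neg, neg_neg] using (hx.hasDerivAt_mul_deriv k s hs).fun_neg

theorem antitoneOn_mul_deriv (hx : IsDEPCAGSolution t ζ r f x x') (ht_mono : Monotone t)
    (ht_top : Tendsto t atTop atTop) (hζ : ∀ k, ζ k ∈ Icc (t k) (t (k + 1)))
    (hr_cont : ContinuousOn r (Ici (t 0))) (hf : ∀ s ∈ Ici (t 0), ∀ y, 0 < y → 0 ≤ f s y)
    {K : ℕ} (hx_pos : ∀ s ∈ Ici (t K), 0 < x s) :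
    AntitoneOn (fun s => r s * x' s) (Ici (t K)) :=
  antitoneOn_Ici_of_hasDerivAt_nonpos ht_mono ht_top
    ((hr_cont.mul hx.continuousOn_deriv).mono (Ici_subset_Ici.2 (ht_mono K.zero_le)))
    fun k hk s hs => ⟨_, neg_nonpos.2 (hf s ((ht_mono k.zero_le).trans hs.1.le) _
      (hx_pos _ ((ht_mono hk).trans (hζ k).1))), hx.hasDerivAt_mul_deriv k s hs⟩

theorem mul_deriv_nonneg (hx : IsDEPCAGSolution t ζ r f x x') (ht_mono : Monotone t)
    (hr_cont : ContinuousOn r (Ici (t 0))) (hr_pos : ∀ s ∈ Ici (t 0), 0 < r s)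
    (hr_int : ∫⁻ s in Ioi (t 0), ENNReal.ofReal (1 / r s) = ⊤) {K : ℕ}
    (hx_pos : ∀ s ∈ Ici (t K), 0 < x s)
    (hg_anti : AntitoneOn (fun s => r s * x' s) (Ici (t K))) :
    ∀ s ∈ Ici (t K), 0 ≤ r s * x' s := by
  intro s₁ hs₁
  by_contra! hneg
  have hsub : Ici s₁ ⊆ Ici (t 0) := Ici_subset_Ici.2 ((ht_mono K.zero_le).trans hs₁)
  have hx_bot : Tendsto x atTop atBot :=
    tendsto_atBot_of_mul_deriv_le_neg (hr_cont.mono hsub) (fun s hs => hr_pos s (hsub hs))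
      (tendsto_intervalIntegral_atTop_of_lintegral_Ioi_eq_top
        (continuousOn_const.div hr_cont fun s hs => (hr_pos s hs).ne')
        (fun s hs => (one_div_pos.2 (hr_pos s hs)).le) hr_int (hsub self_mem_Ici))
      (fun s hs => hx.hasDerivAt s (hsub hs)) (hx.continuousOn_deriv.mono hsub) (neg_pos.2 hneg)
      fun s hs => by
        rw [neg_neg]
        exact hg_anti hs₁ (mem_Ici.2 (hs₁.trans hs)) hs
  obtain ⟨s, hxs, hs⟩ := ((hx_bot.eventually_lt_atBot 0).and (eventually_ge_atTop s₁)).exists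
  exact (hx_pos s (mem_Ici.2 (hs₁.trans hs))).not_gt hxs

theorem mul_integral_Ioi_le_mul_deriv (hx : IsDEPCAGSolution t ζ r f x x') (ht_mono : Monotone t)
    (ht_top : Tendsto t atTop atTop) (hζ : ∀ k, ζ k ∈ Icc (t k) (t (k + 1)))
    (hr_cont : ContinuousOn r (Ici (t 0))) (hp_cont : ContinuousOn p (Ici (t 0)))
    (hp_nonneg : ∀ s ∈ Ici (t 0), 0 ≤ p s) (hp_int : IntegrableOn p (Ioi (t 0)))
    (hφ_mono : Monotone φ) (hfp : ∀ s ∈ Ici (t 0), ∀ y, 0 < y → p s * φ y ≤ f s y)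
    {K j : ℕ} (hj : K ≤ j) (hx_pos : ∀ s ∈ Ici (t K), 0 < x s)
    (hx_mono : MonotoneOn x (Ici (t K))) (hg_nonneg : ∀ s ∈ Ici (t K), 0 ≤ r s * x' s) :
    φ (x (ζ j)) * ∫ u in Ioi (t (j + 1)), p u ≤ r (t (j + 1)) * x' (t (j + 1)) := by
  have ht0 : ∀ k, t 0 ≤ t k := fun k => ht_mono k.zero_le
  have hsub : Ici (t (j + 1)) ⊆ Ici (t 0) := Ici_subset_Ici.2 (ht0 _)
  refine mul_integral_Ioi_le_of_antitoneOn (hp_int.mono_set (Ioi_subset_Ioi (ht0 _)))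
    (fun s hs => hg_nonneg s ((ht_mono (hj.trans j.le_succ)).trans hs)) ?_
  refine antitoneOn_Ici_of_hasDerivAt_nonpos ht_mono ht_top
    (((hr_cont.mul hx.continuousOn_deriv).mono hsub).add
      (continuousOn_const.mul (hp_cont.mono hsub).continuousOn_primitive_Ici))
    fun k hk s hs => ⟨_, ?_, (hx.hasDerivAt_mul_deriv k s hs).add
      ((hp_cont.hasDerivAt_primitive (ht0 _) ((ht0 k).trans_lt hs.1)).const_mul _)⟩
  have hs0 : s ∈ Ici (t 0) := (ht0 k).trans hs.1.le
  have hζk : t K ≤ ζ k := (ht_mono (hj.trans (j.le_succ.trans hk))).trans (hζ k).1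
  have hφ_le : φ (x (ζ j)) ≤ φ (x (ζ k)) :=
    hφ_mono (hx_mono ((ht_mono hj).trans (hζ j).1) hζk
      ((hζ j).2.trans ((ht_mono hk).trans (hζ k).1)))
  nlinarith [hfp s hs0 _ (hx_pos _ hζk), mul_le_mul_of_nonneg_left hφ_le (hp_nonneg s hs0)]

theorem tsum_lt_top_of_mul_deriv_nonneg (hx : IsDEPCAGSolution t ζ r f x x')
    (ht_mono : Monotone t) (ht_top : Tendsto t atTop atTop)
    (hζ : ∀ k, ζ k ∈ Icc (t k) (t (k + 1))) (hr_cont : ContinuousOn r (Ici (t 0)))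
    (hr_pos : ∀ s ∈ Ici (t 0), 0 < r s) (hp_cont : ContinuousOn p (Ici (t 0)))
    (hp_nonneg : ∀ s ∈ Ici (t 0), 0 ≤ p s) (hp_int : IntegrableOn p (Ioi (t 0)))
    (hφ_mono : Monotone φ) (hφ_pos : ∀ y, 0 < y → 0 < φ y)
    (hfp : ∀ s ∈ Ici (t 0), ∀ y, 0 < y → p s * φ y ≤ f s y) {ε : ℝ}
    (hφ_int : ∫⁻ u in Ioi ε, ENNReal.ofReal (1 / φ u) < ⊤) {K : ℕ}
    (hx_pos : ∀ s ∈ Ici (t K), 0 < x s)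
    (hg_anti : AntitoneOn (fun s => r s * x' s) (Ici (t K)))
    (hg_nonneg : ∀ s ∈ Ici (t K), 0 ≤ r s * x' s) :
    ∑' j, ENNReal.ofReal (∫ s in t j..ζ j, 1 / r s * ∫ u in Ioi (t (j + 1)), p u) < ⊤ := by
  have hKsub : Ici (t K) ⊆ Ici (t 0) := Ici_subset_Ici.2 (ht_mono K.zero_le)
  have hx_mono : MonotoneOn x (Ici (t K)) :=
    monotoneOn_of_hasDerivWithinAt_nonneg (convex_Ici _)
      (fun s hs => (hx.hasDerivAt s (hKsub hs)).continuousAt.continuousWithinAt)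
      (fun s hs => (hx.hasDerivAt s (hKsub (interior_subset hs))).hasDerivWithinAt)
      fun s hs => nonneg_of_mul_nonneg_right (hg_nonneg s (interior_subset hs))
        (hr_pos s (hKsub (interior_subset hs)))
  have htK : ∀ i, t K ≤ t (i + K) := fun i => ht_mono (Nat.le_add_left K i)
  have hterm : ∀ j, K ≤ j →
      ENNReal.ofReal (∫ s in t j..ζ j, 1 / r s * ∫ u in Ioi (t (j + 1)), p u)
        ≤ ∫⁻ u in Ioc (x (t j)) (x (ζ j)), ENNReal.ofReal (1 / φ u) := by
    intro j hj
    have hIcc : Icc (t j) (ζ j) ⊆ Ici (t K) := fun s hs => (ht_mono hj).trans hs.1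
    refine (ENNReal.ofReal_le_ofReal (integral_one_div_mul_le_sub_div (hζ j).1
      (hr_cont.mono (hIcc.trans hKsub)) (fun s hs => hr_pos s (hKsub (hIcc hs)))
      (fun s hs => hx.hasDerivAt s (hKsub (hIcc hs)))
      (hx.continuousOn_deriv.mono (hIcc.trans hKsub))
      (hφ_pos _ (hx_pos _ (hIcc (right_mem_Icc.2 (hζ j).1)))) fun s hs => ?_)).trans
      (ofReal_sub_div_le_lintegral_Ioc hφ_mono
        (hx_mono (hIcc (left_mem_Icc.2 (hζ j).1)) (hIcc (right_mem_Icc.2 (hζ j).1)) (hζ j).1)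
        (hφ_pos _ (hx_pos _ (hIcc (left_mem_Icc.2 (hζ j).1)))))
    exact (hx.mul_integral_Ioi_le_mul_deriv ht_mono ht_top hζ hr_cont hp_cont hp_nonneg hp_int
      hφ_mono hfp hj hx_pos hx_mono hg_nonneg).trans
      (hg_anti (hIcc hs) ((hIcc hs).trans (hs.2.trans (hζ j).2)) (hs.2.trans (hζ j).2))
  rw [← ENNReal.summable.sum_add_tsum_nat_add' (k := K)]
  refine ENNReal.add_lt_top.2 ⟨ENNReal.sum_lt_top.2 fun _ _ => ENNReal.ofReal_lt_top, ?_⟩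
  calc _ ≤ ∑' i, ∫⁻ u in Ioc (x (t (i + K))) (x (ζ (i + K))), ENNReal.ofReal (1 / φ u) :=
        ENNReal.tsum_le_tsum fun i => hterm _ (Nat.le_add_left K i)
    _ ≤ ∫⁻ u in Ioi (x (t (0 + K))), ENNReal.ofReal (1 / φ u) :=
        tsum_setLIntegral_Ioc_le_setLIntegral_Ioi (a := fun i => x (t (i + K)))
          (fun i i' h => hx_mono (htK i) (htK i') (ht_mono (Nat.add_le_add_right h K)))
          (fun i => hx_mono ((htK i).trans (hζ _).1) (htK (i + 1))
            (by simpa only [Nat.add_right_comm] using (hζ (i + K)).2)) _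
    _ < ⊤ := lintegral_Ioi_one_div_lt_top hφ_mono (hφ_pos _ (hx_pos _ (htK 0))) hφ_int

theorem frequently_nonpos (hx : IsDEPCAGSolution t ζ r f x x') (ht_mono : Monotone t)
    (ht_top : Tendsto t atTop atTop) (hζ : ∀ k, ζ k ∈ Icc (t k) (t (k + 1)))
    (hr_cont : ContinuousOn r (Ici (t 0))) (hr_pos : ∀ s ∈ Ici (t 0), 0 < r s)
    (hp_cont : ContinuousOn p (Ici (t 0))) (hp_nonneg : ∀ s ∈ Ici (t 0), 0 ≤ p s)
    (hφ_mono : Monotone φ) (hφ_pos : ∀ y, 0 < y → 0 < φ y)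
    (hfp : ∀ s ∈ Ici (t 0), ∀ y, 0 < y → p s * φ y ≤ f s y)
    (hr_int : ∫⁻ s in Ioi (t 0), ENNReal.ofReal (1 / r s) = ⊤) {ε : ℝ}
    (hφ_int : ∫⁻ u in Ioi ε, ENNReal.ofReal (1 / φ u) < ⊤)
    (hp_int : ∫⁻ u in Ioi (t 0), ENNReal.ofReal (p u) < ⊤)
    (hsum : ∑' j, ENNReal.ofReal (∫ s in t j..ζ j, 1 / r s * ∫ u in Ioi (t (j + 1)), p u) = ⊤) :
    ∃ᶠ s in atTop, x s ≤ 0 := by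
  refine frequently_atTop.2 fun T => ?_
  by_contra! hT
  obtain ⟨K, hK⟩ := (ht_top.eventually_ge_atTop T).exists
  have hx_pos : ∀ s ∈ Ici (t K), 0 < x s := fun s hs => hT s (hK.trans hs)
  have hp_integrable : IntegrableOn p (Ioi (t 0)) :=
    ⟨(hp_cont.mono Ioi_subset_Ici_self).aestronglyMeasurable measurableSet_Ioi,
      (hasFiniteIntegral_iff_ofReal (ae_restrict_of_forall_mem measurableSet_Ioi
        fun u hu => hp_nonneg u (le_of_lt hu))).2 hp_int⟩
  have hg_anti := hx.antitoneOn_mul_deriv ht_mono ht_top hζ hr_cont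
    (fun s hs y hy => (mul_nonneg (hp_nonneg s hs) (hφ_pos y hy).le).trans (hfp s hs y hy)) hx_pos
  have hg_nonneg := hx.mul_deriv_nonneg ht_mono hr_cont hr_pos hr_int hx_pos hg_anti
  exact (hx.tsum_lt_top_of_mul_deriv_nonneg ht_mono ht_top hζ hr_cont hr_pos hp_cont hp_nonneg
    hp_integrable hφ_mono hφ_pos hfp hφ_int hx_pos hg_anti hg_nonneg).ne hsum

theorem frequently_nonneg (hx : IsDEPCAGSolution t ζ r f x x') (ht_mono : Monotone t)
    (ht_top : Tendsto t atTop atTop) (hζ : ∀ k, ζ k ∈ Icc (t k) (t (k + 1)))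
    (hr_cont : ContinuousOn r (Ici (t 0))) (hr_pos : ∀ s ∈ Ici (t 0), 0 < r s)
    (hp_cont : ContinuousOn p (Ici (t 0))) (hp_nonneg : ∀ s ∈ Ici (t 0), 0 ≤ p s)
    (hφ_mono : Monotone φ) (hφ_neg : ∀ y, y < 0 → φ y < 0)
    (hfp : ∀ s ∈ Ici (t 0), ∀ y, y < 0 → f s y ≤ p s * φ y)
    (hr_int : ∫⁻ s in Ioi (t 0), ENNReal.ofReal (1 / r s) = ⊤) {ε : ℝ}
    (hφ_int : ∫⁻ u in Iio (-ε), ENNReal.ofReal (1 / -φ u) < ⊤)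
    (hp_int : ∫⁻ u in Ioi (t 0), ENNReal.ofReal (p u) < ⊤)
    (hsum : ∑' j, ENNReal.ofReal (∫ s in t j..ζ j, 1 / r s * ∫ u in Ioi (t (j + 1)), p u) = ⊤) :
    ∃ᶠ s in atTop, 0 ≤ x s := by
  have := hx.neg.frequently_nonpos (φ := fun y => -φ (-y)) ht_mono ht_top hζ hr_cont hr_pos
    hp_cont hp_nonneg (fun _ _ h => neg_le_neg (hφ_mono (neg_le_neg h)))
    (fun y hy => neg_pos.2 (hφ_neg _ (neg_neg_of_pos hy)))
    (fun s hs y hy => by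
      simpa only [mul_neg, neg_le_neg_iff] using hfp s hs (-y) (neg_neg_of_pos hy))
    hr_int (by rwa [lintegral_Ioi_comp_neg (fun u => ENNReal.ofReal (1 / -φ u))]) hp_int hsum
  simpa only [Pi.neg_apply, neg_nonpos] using this

end IsDEPCAGSolution

theorem stmt2_general
    (t ζ : ℕ → ℝ) (ht_mono : StrictMono t)
    (ht_top : Tendsto t atTop atTop)
    (hζ : ∀ k : ℕ, ζ k ∈ Icc (t k) (t (k+1)))
    (r : ℝ → ℝ) (hr_cont : ContinuousOn r (Ici (t 0)))
    (hr_pos : ∀ s ∈ Ici (t 0), 0 < r s)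
    (f : ℝ → ℝ → ℝ)
    (x x' : ℝ → ℝ)
    (hx_deriv : ∀ s ∈ Ici (t 0), HasDerivAt x (x' s) s)
    (hx'_cont : ContinuousOn x' (Ici (t 0)))
    (hE : ∀ k : ℕ, ∀ s ∈ Ioo (t k) (t (k+1)),
      HasDerivAt (fun u => r u * x' u) (-(f s (x (ζ k)))) s)
    (p : ℝ → ℝ) (hp_cont : ContinuousOn p (Ici (t 0)))
    (hp_nonneg : ∀ s ∈ Ici (t 0), 0 ≤ p s)
    (φ : ℝ → ℝ) (hφ_mono : Monotone φ)
    (hφ_sign : ∀ y : ℝ, y ≠ 0 → 0 < y * φ y)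
    (hfp_pos : ∀ s ∈ Ici (t 0), ∀ y : ℝ, 0 < y → p s * φ y ≤ f s y)
    (hfp_neg : ∀ s ∈ Ici (t 0), ∀ y : ℝ, y < 0 → f s y ≤ p s * φ y)
    (hr_int : ∫⁻ s in Ioi (t 0), ENNReal.ofReal (1 / r s) = ⊤)
    (ε : ℝ)
    (hφ_int_pos : ∫⁻ u in Ioi ε, ENNReal.ofReal (1 / φ u) < ⊤)
    (hφ_int_neg : ∫⁻ u in Iio (-ε), ENNReal.ofReal (1 / (-φ u)) < ⊤)
    (hp_int : ∫⁻ u in Ioi (t 0), ENNReal.ofReal (p u) < ⊤)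
    (hsum : ∑' j : ℕ, ENNReal.ofReal
        (∫ s in t j..ζ j, (1 / r s) * (∫ u in Ioi (t (j+1)), p u)) = ⊤) :
    ∃ a b : ℕ → ℝ, Tendsto a atTop atTop ∧ Tendsto b atTop atTop ∧
      ∀ n : ℕ, x (a n) ≤ 0 ∧ 0 ≤ x (b n) := by
  have hx : IsDEPCAGSolution t ζ r f x x' := ⟨hx_deriv, hx'_cont, hE⟩
  obtain ⟨a, ha, hxa⟩ := exists_seq_forall_of_frequently <|
    hx.frequently_nonpos ht_mono.monotone ht_top hζ hr_cont hr_pos hp_cont hp_nonneg hφ_mono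
      (fun y hy => pos_of_mul_pos_right (hφ_sign y hy.ne') hy.le) hfp_pos hr_int hφ_int_pos
      hp_int hsum
  obtain ⟨b, hb, hxb⟩ := exists_seq_forall_of_frequently <|
    hx.frequently_nonneg ht_mono.monotone ht_top hζ hr_cont hr_pos hp_cont hp_nonneg hφ_mono
      (fun y hy => neg_of_mul_pos_right (hφ_sign y hy.ne) hy.le) hfp_neg hr_int hφ_int_neg
      hp_int hsum
  exact ⟨a, b, ha, hb, fun n => ⟨hxa n, hxb n⟩⟩

theorem stmt2
    (t ζ : ℕ → ℝ) (ht_mono : StrictMono t)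
    (ht_top : Tendsto t atTop atTop)
    (hζ : ∀ k : ℕ, ζ k ∈ Icc (t k) (t (k+1)))
    (r : ℝ → ℝ) (hr_cont : ContinuousOn r (Ici (t 0)))
    (hr_pos : ∀ s ∈ Ici (t 0), 0 < r s)
    (f : ℝ → ℝ → ℝ)
    (hf_cont : ContinuousOn (fun q : ℝ × ℝ => f q.1 q.2) ((Ici (t 0)) ×ˢ (univ : Set ℝ)))
    (hf_sign : ∀ s ∈ Ici (t 0), ∀ y : ℝ, y ≠ 0 → 0 < y * f s y)
    (x x' : ℝ → ℝ)
    (hx_deriv : ∀ s ∈ Ici (t 0), HasDerivAt x (x' s) s)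
    (hx'_cont : ContinuousOn x' (Ici (t 0)))
    (hE : ∀ k : ℕ, ∀ s ∈ Ioo (t k) (t (k+1)),
      HasDerivAt (fun u => r u * x' u) (-(f s (x (ζ k)))) s)
    (p : ℝ → ℝ) (hp_cont : ContinuousOn p (Ici (t 0)))
    (hp_nonneg : ∀ s ∈ Ici (t 0), 0 ≤ p s)
    (φ : ℝ → ℝ) (hφ_smooth : ContDiff ℝ 1 φ) (hφ_mono : Monotone φ)
    (hφ_sign : ∀ y : ℝ, y ≠ 0 → 0 < y * φ y)
    (hfp_pos : ∀ s ∈ Ici (t 0), ∀ y : ℝ, 0 < y → p s * φ y ≤ f s y)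
    (hfp_neg : ∀ s ∈ Ici (t 0), ∀ y : ℝ, y < 0 → f s y ≤ p s * φ y)
    (hr_int : ∫⁻ s in Ioi (t 0), ENNReal.ofReal (1 / r s) = ⊤)
    (ε : ℝ) (hε : 0 < ε)
    (hφ_int_pos : ∫⁻ u in Ioi ε, ENNReal.ofReal (1 / φ u) < ⊤)
    (hφ_int_neg : ∫⁻ u in Iio (-ε), ENNReal.ofReal (1 / (-φ u)) < ⊤)
    (hp_int : ∫⁻ u in Ioi (t 0), ENNReal.ofReal (p u) < ⊤)
    (hsum : ∑' j : ℕ, ENNReal.ofReal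
        (∫ s in t j..ζ j, (1 / r s) * (∫ u in Ioi (t (j+1)), p u)) = ⊤) :
    ∃ a b : ℕ → ℝ, Tendsto a atTop atTop ∧ Tendsto b atTop atTop ∧
      ∀ n : ℕ, x (a n) ≤ 0 ∧ 0 ≤ x (b n) :=
  stmt2_general t ζ ht_mono ht_top hζ r hr_cont hr_pos f x x' hx_deriv hx'_cont hE p hp_cont
    hp_nonneg φ hφ_mono hφ_sign hfp_pos hfp_neg hr_int ε hφ_int_pos hφ_int_neg hp_int hsum
end

section
/- Assume ∫_τ^∞ p(u) du < ∞. Let x be a solution of (E) with x(t) > 0 and x′(t) ≥ 0 for all t ≥ τ. Then for every k and every s ∈ [t_k, ζ_k], x′(s)/φ(x(s)) ≥ (1/r(s))·∫_{t_{k+1}}^∞ p(u) du. -/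
open MeasureTheory Set Filter

/-
Fix `s ∈ [t_k, ζ_k]` and put `c = φ(x s) > 0`. On `[t_j, t_{j+1}]` with `j ≥ k` the argument
`ζ_j ≥ s`, so `(r x')' = -f(·, x ζ_j) ≤ -c p` there, since `x` is nondecreasing and `φ` monotone.
Hence `r x' + c ∫ p` is nonincreasing along `s ≤ t_{k+1} ≤ t_{k+2} ≤ …`; as `r x' ≥ 0` this gives
`c ∫_s^T p ≤ r(s) x'(s)` for all such `T`, and letting `T → ∞` finishes the proof.
-/

theorem integral_le_sub_of_hasDerivAt_neg {g F h : ℝ → ℝ} {a b : ℝ} (hab : a ≤ b)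
    (hg : ContinuousOn g (Icc a b)) (hh : ContinuousOn h (Icc a b))
    (hderiv : ∀ u ∈ Ioo a b, HasDerivAt g (-F u) u) (hle : ∀ u ∈ Ioo a b, h u ≤ F u) :
    ∫ u in a..b, h u ≤ g a - g b := by
  have hprim : ContinuousOn (fun u => ∫ v in a..u, h v) (Icc a b) := by
    have := intervalIntegral.continuousOn_primitive_interval (μ := volume) (a := a) (b := b)
      (by rw [uIcc_of_le hab]; exact hh.integrableOn_compact isCompact_Icc)
    rwa [uIcc_of_le hab] at this
  have hanti : AntitoneOn (fun u => g u + ∫ v in a..u, h v) (Icc a b) := by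
    refine antitoneOn_of_hasDerivWithinAt_nonpos (convex_Icc a b) (hg.add hprim)
      (f' := fun u => -F u + h u) (fun u hu => ?_) (fun u hu => ?_)
    · rw [interior_Icc] at hu ⊢
      have hprim_deriv : HasDerivAt (fun u => ∫ v in a..u, h v) (h u) u :=
        intervalIntegral.integral_hasDerivAt_right
          ((hh.mono (Icc_subset_Icc_right hu.2.le)).intervalIntegrable_of_Icc hu.1.le)
          (hh.mono Ioo_subset_Icc_self |>.stronglyMeasurableAtFilter isOpen_Ioo u hu)
          (hh.continuousAt (Icc_mem_nhds hu.1 hu.2))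
      exact ((hderiv u hu).add hprim_deriv).hasDerivWithinAt
    · rw [interior_Icc] at hu
      linarith [hle u hu]
  have := hanti (left_mem_Icc.2 hab) (right_mem_Icc.2 hab) hab
  simp only [intervalIntegral.integral_same, add_zero] at this
  linarith

theorem integral_le_sub_of_hasDerivAt_neg_of_monotone {a : ℕ → ℝ} (ha : Monotone a)
    {g h : ℝ → ℝ} {F : ℕ → ℝ → ℝ} (hg : ContinuousOn g (Ici (a 0)))
    (hh : ContinuousOn h (Ici (a 0)))
    (hderiv : ∀ n, ∀ u ∈ Ioo (a n) (a (n + 1)), HasDerivAt g (-F n u) u)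
    (hle : ∀ n, ∀ u ∈ Ioo (a n) (a (n + 1)), h u ≤ F n u) (N : ℕ) :
    ∫ u in a 0..a N, h u ≤ g (a 0) - g (a N) := by
  have hcell : ∀ n, Icc (a n) (a (n + 1)) ⊆ Ici (a 0) := fun n u hu =>
    (ha (Nat.zero_le n)).trans hu.1
  calc ∫ u in a 0..a N, h u = ∑ n ∈ Finset.range N, ∫ u in a n..a (n + 1), h u :=
        (intervalIntegral.sum_integral_adjacent_intervals fun n _ =>
          (hh.mono (hcell n)).intervalIntegrable_of_Icc (ha n.le_succ)).symm
    _ ≤ ∑ n ∈ Finset.range N, (g (a n) - g (a (n + 1))) :=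
        Finset.sum_le_sum fun n _ => integral_le_sub_of_hasDerivAt_neg (ha n.le_succ)
          (hg.mono (hcell n)) (hh.mono (hcell n)) (hderiv n) (hle n)
    _ = g (a 0) - g (a N) := Finset.sum_range_sub' _ _

theorem monotone_of_mem_Icc_succ {t ζ : ℕ → ℝ} (hζ : ∀ k, ζ k ∈ Icc (t k) (t (k + 1))) :
    Monotone ζ :=
  monotone_nat_of_le_succ fun k => (hζ k).2.trans (hζ (k + 1)).1

theorem monotoneOn_Ici_of_hasDerivAt_nonneg {x x' : ℝ → ℝ} {a : ℝ}
    (hx : ∀ s ∈ Ici a, HasDerivAt x (x' s) s) (hx' : ∀ s ∈ Ici a, 0 ≤ x' s) :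
    MonotoneOn x (Ici a) := by
  refine monotoneOn_of_hasDerivWithinAt_nonneg (convex_Ici a) (f' := x')
    (fun s hs => (hx s hs).continuousAt.continuousWithinAt) (fun s hs => ?_) (fun s hs => ?_)
  all_goals rw [interior_Ici] at hs
  · exact (hx s (mem_Ici.2 hs.le)).hasDerivWithinAt
  · exact hx' s (mem_Ici.2 hs.le)

theorem integrableOn_Ioi_of_lintegral_ofReal_lt_top {p : ℝ → ℝ} {a : ℝ}
    (hp_cont : ContinuousOn p (Ici a)) (hp_nonneg : ∀ u ∈ Ici a, 0 ≤ p u)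
    (hp_int : ∫⁻ u in Ioi a, ENNReal.ofReal (p u) < ⊤) : IntegrableOn p (Ioi a) := by
  refine ⟨(hp_cont.mono Ioi_subset_Ici_self).aestronglyMeasurable measurableSet_Ioi, ?_⟩
  rw [hasFiniteIntegral_iff_ofReal]
  · exact hp_int
  · exact (ae_restrict_mem measurableSet_Ioi).mono fun u hu => hp_nonneg u (mem_Ici.2 hu.le)

theorem mul_integral_le_mul_deriv_of_solution {t ζ : ℕ → ℝ} (ht : Monotone t)
    (hζ : ∀ k : ℕ, ζ k ∈ Icc (t k) (t (k + 1)))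
    {r : ℝ → ℝ} (hr_cont : ContinuousOn r (Ici (t 0))) (hr_pos : ∀ s ∈ Ici (t 0), 0 < r s)
    {f : ℝ → ℝ → ℝ} {x x' : ℝ → ℝ} (hx_mono : MonotoneOn x (Ici (t 0)))
    (hx'_cont : ContinuousOn x' (Ici (t 0)))
    (hE : ∀ k : ℕ, ∀ s ∈ Ioo (t k) (t (k + 1)),
      HasDerivAt (fun u => r u * x' u) (-(f s (x (ζ k)))) s)
    {p : ℝ → ℝ} (hp_cont : ContinuousOn p (Ici (t 0))) (hp_nonneg : ∀ s ∈ Ici (t 0), 0 ≤ p s)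
    {φ : ℝ → ℝ} (hφ_mono : Monotone φ)
    (hfp_pos : ∀ s ∈ Ici (t 0), ∀ y : ℝ, 0 < y → p s * φ y ≤ f s y)
    (hx_pos : ∀ s ∈ Ici (t 0), 0 < x s) (hx'_nonneg : ∀ s ∈ Ici (t 0), 0 ≤ x' s)
    {k : ℕ} {s : ℝ} (hs : s ∈ Icc (t k) (ζ k)) (N : ℕ) :
    φ (x s) * ∫ u in s..max s (t (N + k)), p u ≤ r s * x' s := by
  have hs0 : t 0 ≤ s := (ht k.zero_le).trans hs.1
  have hζ_mono := monotone_of_mem_Icc_succ hζ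
  -- the grid `s ≤ t (k+1) ≤ t (k+2) ≤ ⋯`, whose `n`-th cell lies in `[t (n+k), t (n+k+1)]`
  set a : ℕ → ℝ := fun n => max s (t (n + k))
  have ha : Monotone a := fun m n hmn => max_le_max le_rfl (ht (by omega))
  have ha0 : a 0 = s := max_eq_left (by simpa using hs.1)
  have hsub : Ici (a 0) ⊆ Ici (t 0) := fun u hu => hs0.trans (ha0 ▸ hu)
  have hcell : ∀ n, ∀ u ∈ Ioo (a n) (a (n + 1)), u ∈ Ioo (t (n + k)) (t (n + k + 1)) ∧ s < u :=
    fun n u hu => ⟨⟨(le_max_right _ _).trans_lt hu.1, hu.2.trans_le (max_le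
      (hs.2.trans ((hζ k).2.trans (ht (by omega)))) (by rw [Nat.add_right_comm]))⟩,
      (le_max_left _ _).trans_lt hu.1⟩
  have := integral_le_sub_of_hasDerivAt_neg_of_monotone ha (g := fun u => r u * x' u)
    (h := fun u => φ (x s) * p u) (F := fun n u => f u (x (ζ (n + k))))
    ((hr_cont.mul hx'_cont).mono hsub) ((continuousOn_const.mul hp_cont).mono hsub)
    (fun n u hu => hE (n + k) u (hcell n u hu).1) (fun n u hu => ?_) N
  · rw [intervalIntegral.integral_const_mul, ha0] at this
    have haN : t 0 ≤ a N := hs0.trans (le_max_left _ _)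
    linarith [mul_nonneg (hr_pos _ haN).le (hx'_nonneg _ haN)]
  · have hu0 : t 0 ≤ u := hs0.trans (hcell n u hu).2.le
    have hsζ : s ≤ ζ (n + k) := hs.2.trans (hζ_mono (by omega))
    have hζ0 : t 0 ≤ ζ (n + k) := hs0.trans hsζ
    calc φ (x s) * p u ≤ p u * φ (x (ζ (n + k))) := by
          rw [mul_comm]
          exact mul_le_mul_of_nonneg_left (hφ_mono (hx_mono hs0 hζ0 hsζ)) (hp_nonneg u hu0)
      _ ≤ f u (x (ζ (n + k))) := hfp_pos u hu0 _ (hx_pos _ hζ0)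

theorem stmt14_general
    (t ζ : ℕ → ℝ) (ht_mono : StrictMono t)
    (ht_top : Tendsto t atTop atTop)
    (hζ : ∀ k : ℕ, ζ k ∈ Icc (t k) (t (k+1)))
    (r : ℝ → ℝ) (hr_cont : ContinuousOn r (Ici (t 0)))
    (hr_pos : ∀ s ∈ Ici (t 0), 0 < r s)
    (f : ℝ → ℝ → ℝ)
    (x x' : ℝ → ℝ)
    (hx_deriv : ∀ s ∈ Ici (t 0), HasDerivAt x (x' s) s)
    (hx'_cont : ContinuousOn x' (Ici (t 0)))
    (hE : ∀ k : ℕ, ∀ s ∈ Ioo (t k) (t (k+1)),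
      HasDerivAt (fun u => r u * x' u) (-(f s (x (ζ k)))) s)
    (p : ℝ → ℝ) (hp_cont : ContinuousOn p (Ici (t 0)))
    (hp_nonneg : ∀ s ∈ Ici (t 0), 0 ≤ p s)
    (φ : ℝ → ℝ) (hφ_mono : Monotone φ)
    (hφ_sign : ∀ y : ℝ, y ≠ 0 → 0 < y * φ y)
    (hfp_pos : ∀ s ∈ Ici (t 0), ∀ y : ℝ, 0 < y → p s * φ y ≤ f s y)
    (hp_int : ∫⁻ u in Ioi (t 0), ENNReal.ofReal (p u) < ⊤)
    (hx_pos : ∀ s ∈ Ici (t 0), 0 < x s)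
    (hx'_nonneg : ∀ s ∈ Ici (t 0), 0 ≤ x' s) :
    ∀ k : ℕ, ∀ s ∈ Icc (t k) (ζ k),
      (1 / r s) * ∫ u in Ioi (t (k+1)), p u ≤ x' s / φ (x s) := by
  intro k s hs
  have hs0 : t 0 ≤ s := (ht_mono.monotone k.zero_le).trans hs.1
  have hxs : 0 < x s := hx_pos s hs0
  have hc : 0 < φ (x s) := pos_of_mul_pos_right (hφ_sign _ hxs.ne') hxs.le
  have hbound := mul_integral_le_mul_deriv_of_solution ht_mono.monotone hζ hr_cont hr_pos
    (monotoneOn_Ici_of_hasDerivAt_nonneg hx_deriv hx'_nonneg) hx'_cont hE hp_cont hp_nonneg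
    hφ_mono hfp_pos hx_pos hx'_nonneg hs
  have hint : IntegrableOn p (Ioi s) :=
    (integrableOn_Ioi_of_lintegral_ofReal_lt_top hp_cont hp_nonneg hp_int).mono_set
      (Ioi_subset_Ioi hs0)
  have hgrid_top : Tendsto (fun N => max s (t (N + k))) atTop atTop :=
    tendsto_atTop_mono (fun N => le_max_right _ _) (ht_top.comp (tendsto_add_atTop_nat k))
  have key : φ (x s) * ∫ u in Ioi s, p u ≤ r s * x' s :=
    le_of_tendsto' ((intervalIntegral_tendsto_integral_Ioi s hint hgrid_top).const_mul _) hbound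
  have htail : ∫ u in Ioi (t (k + 1)), p u ≤ ∫ u in Ioi s, p u :=
    setIntegral_mono_set hint
      ((ae_restrict_mem measurableSet_Ioi).mono fun u hu => hp_nonneg u (hs0.trans hu.le))
      (Ioi_subset_Ioi (hs.2.trans (hζ k).2)).eventuallyLE
  rw [one_div_mul_eq_div, div_le_div_iff₀ (hr_pos s hs0) hc]
  linarith [mul_le_mul_of_nonneg_left htail hc.le]

theorem stmt14
    (t ζ : ℕ → ℝ) (ht_mono : StrictMono t)
    (ht_top : Tendsto t atTop atTop)
    (hζ : ∀ k : ℕ, ζ k ∈ Icc (t k) (t (k+1)))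
    (r : ℝ → ℝ) (hr_cont : ContinuousOn r (Ici (t 0)))
    (hr_pos : ∀ s ∈ Ici (t 0), 0 < r s)
    (f : ℝ → ℝ → ℝ)
    (hf_cont : ContinuousOn (fun q : ℝ × ℝ => f q.1 q.2) ((Ici (t 0)) ×ˢ (univ : Set ℝ)))
    (hf_sign : ∀ s ∈ Ici (t 0), ∀ y : ℝ, y ≠ 0 → 0 < y * f s y)
    (x x' : ℝ → ℝ)
    (hx_deriv : ∀ s ∈ Ici (t 0), HasDerivAt x (x' s) s)
    (hx'_cont : ContinuousOn x' (Ici (t 0)))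
    (hE : ∀ k : ℕ, ∀ s ∈ Ioo (t k) (t (k+1)),
      HasDerivAt (fun u => r u * x' u) (-(f s (x (ζ k)))) s)
    (p : ℝ → ℝ) (hp_cont : ContinuousOn p (Ici (t 0)))
    (hp_nonneg : ∀ s ∈ Ici (t 0), 0 ≤ p s)
    (φ : ℝ → ℝ) (hφ_smooth : ContDiff ℝ 1 φ) (hφ_mono : Monotone φ)
    (hφ_sign : ∀ y : ℝ, y ≠ 0 → 0 < y * φ y)
    (hfp_pos : ∀ s ∈ Ici (t 0), ∀ y : ℝ, 0 < y → p s * φ y ≤ f s y)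
    (hfp_neg : ∀ s ∈ Ici (t 0), ∀ y : ℝ, y < 0 → f s y ≤ p s * φ y)
    (hp_int : ∫⁻ u in Ioi (t 0), ENNReal.ofReal (p u) < ⊤)
    (hx_pos : ∀ s ∈ Ici (t 0), 0 < x s)
    (hx'_nonneg : ∀ s ∈ Ici (t 0), 0 ≤ x' s) :
    ∀ k : ℕ, ∀ s ∈ Icc (t k) (ζ k),
      (1 / r s) * ∫ u in Ioi (t (k+1)), p u ≤ x' s / φ (x s) :=
  stmt14_general t ζ ht_mono ht_top hζ r hr_cont hr_pos f x x' hx_deriv hx'_cont hE p hp_cont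
    hp_nonneg φ hφ_mono hφ_sign hfp_pos hp_int hx_pos hx'_nonneg
end

section
/- Every solution x of the DEPCAG (e^{−t}·x′(t))′ + x(γ(t))·e^{t² + x(γ(t))²} = 0, t ≥ 0 (i.e., every continuously differentiable x : [0, ∞) → ℝ such that for every k and every t ∈ (t_k, t_{k+1}), the function s ↦ e^{−s}·x′(s) is differentiable at t with derivative −x(ζ_k)·e^{t² + x(ζ_k)²}), is oscillatory. -/
/-!
Suppose `x > 0` on `[t_K, ∞)`. Then `y(s) = e^{-s} x'(s)` is decreasing there, since on each
interval `(t_k, t_{k+1})` its derivative is `-x(ζ_k) e^{s² + x(ζ_k)²} < 0`. If `y(t₁) < 0` for some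
`t₁ ≥ t_K`, then `x'(s) = e^s y(s) ≤ e^{t₁} y(t₁) = x'(t₁) < 0` for `s ≥ t₁`, so `x → -∞`.
Otherwise `x' ≥ 0` on `[t_K, ∞)`, so `x(ζ_k) ≥ x(t_K) > 0` for `k ≥ K`, hence `y' ≤ -x(t_K)`
and `y → -∞`. Either way we contradict the sign assumption. The equation is odd in `x`, so the
same holds for `-x`.
-/

open Set Filter

theorem antitoneOn_Ici_of_antitoneOn_Icc {α β : Type*} [LinearOrder α] [Preorder β]
    {f : α → β} {t : ℕ → α} (ht : Monotone t) (ht_top : Tendsto t atTop atTop) {K : ℕ}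
    (hf : ∀ k ≥ K, AntitoneOn f (Icc (t k) (t (k + 1)))) :
    AntitoneOn f (Ici (t K)) := by
  have hIcc : ∀ n, AntitoneOn f (Icc (t K) (t (K + n))) := by
    intro n
    induction n with
    | zero => exact (subsingleton_Icc_of_ge (le_refl (t (K + 0)))).antitoneOn f
    | succ n ih =>
      rw [← add_assoc, ← Icc_union_Icc_eq_Icc (ht (Nat.le_add_right K n)) (ht (Nat.le_succ _))]
      exact ih.union_right (hf _ (Nat.le_add_right K n))
        (isGreatest_Icc (ht (Nat.le_add_right K n))) (isLeast_Icc (ht (Nat.le_succ _)))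
  intro a ha b hb hab
  obtain ⟨n, hn⟩ := (ht_top.eventually_ge_atTop b).exists
  have hbn : b ≤ t (K + n) := hn.trans (ht (Nat.le_add_left n K))
  exact hIcc n ⟨ha, hab.trans hbn⟩ ⟨ha.trans hab, hbn⟩ hab

theorem antitoneOn_Ici_of_hasDerivAt_Ioo {t : ℕ → ℝ} (ht : Monotone t)
    (ht_top : Tendsto t atTop atTop) {K : ℕ} {g : ℝ → ℝ} (hg : ContinuousOn g (Ici (t K)))
    (hg' : ∀ k ≥ K, ∀ s ∈ Ioo (t k) (t (k + 1)), ∃ d ≤ 0, HasDerivAt g d s) :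
    AntitoneOn g (Ici (t K)) := by
  refine antitoneOn_Ici_of_antitoneOn_Icc ht ht_top fun k hk => ?_
  refine antitoneOn_of_deriv_nonpos (convex_Icc _ _)
    (hg.mono fun s hs => (ht hk).trans hs.1) (fun s hs => ?_) (fun s hs => ?_) <;>
  rw [interior_Icc] at hs <;> obtain ⟨d, hd, hgd⟩ := hg' k hk s hs
  · exact hgd.differentiableAt.differentiableWithinAt
  · rwa [hgd.deriv]

theorem tendsto_atBot_of_antitoneOn_add_mul {g : ℝ → ℝ} {a c : ℝ} (hc : 0 < c)
    (hg : AntitoneOn (fun s => g s + c * s) (Ici a)) : Tendsto g atTop atBot := by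
  have hline : Tendsto (fun s => g a + c * a - c * s) atTop atBot :=
    tendsto_atBot_add_const_left _ _
      (tendsto_neg_atTop_atBot.comp (tendsto_id.const_mul_atTop hc))
  refine tendsto_atBot_mono' _ ?_ hline
  filter_upwards [eventually_ge_atTop a] with s hs
  have := hg self_mem_Ici hs hs
  linarith

theorem tendsto_atBot_of_hasDerivAt_Ioo_le_neg {t : ℕ → ℝ} (ht : Monotone t)
    (ht_top : Tendsto t atTop atTop) {K : ℕ} {g : ℝ → ℝ} {c : ℝ} (hc : 0 < c)
    (hg : ContinuousOn g (Ici (t K)))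
    (hg' : ∀ k ≥ K, ∀ s ∈ Ioo (t k) (t (k + 1)), ∃ d ≤ -c, HasDerivAt g d s) :
    Tendsto g atTop atBot := by
  refine tendsto_atBot_of_antitoneOn_add_mul hc <|
    antitoneOn_Ici_of_hasDerivAt_Ioo ht ht_top (hg.add (by fun_prop)) fun k hk s hs => ?_
  obtain ⟨d, hd, hgd⟩ := hg' k hk s hs
  exact ⟨d + c, by linarith, hgd.add ((hasDerivAt_id s).const_mul c |>.congr_deriv (mul_one c))⟩

theorem tendsto_atBot_of_antitoneOn_exp_neg_mul_deriv {x x' : ℝ → ℝ} {a t₁ : ℝ}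
    (hx : ∀ s ≥ a, HasDerivAt x (x' s) s)
    (hy : AntitoneOn (fun s => Real.exp (-s) * x' s) (Ici a)) (ht₁ : a ≤ t₁)
    (hneg : x' t₁ < 0) : Tendsto x atTop atBot := by
  have hx' : ∀ s ≥ t₁, x' s ≤ x' t₁ := fun s hs => by
    have hys := hy ht₁ (ht₁.trans hs) hs
    simp only at hys
    calc x' s = Real.exp s * (Real.exp (-s) * x' s) := by simp [← mul_assoc, ← Real.exp_add]
      _ ≤ Real.exp s * (Real.exp (-t₁) * x' t₁) := by gcongr
      _ ≤ Real.exp t₁ * (Real.exp (-t₁) * x' t₁) :=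
        mul_le_mul_of_nonpos_right (Real.exp_le_exp.2 hs)
          (mul_neg_of_pos_of_neg (Real.exp_pos _) hneg).le
      _ = x' t₁ := by simp [← mul_assoc, ← Real.exp_add]
  refine tendsto_atBot_of_antitoneOn_add_mul (neg_pos.2 hneg) <|
    antitoneOn_of_hasDerivWithinAt_nonpos (f' := fun s => x' s + -x' t₁) (convex_Ici t₁)
      (fun s hs => ?_) (fun s hs => ?_) (fun s hs => ?_)
  · exact ((hx s (ht₁.trans hs)).continuousAt.add (by fun_prop)).continuousWithinAt
  · rw [interior_Ici] at hs
    exact ((hx s (ht₁.trans hs.le)).add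
      ((hasDerivAt_id s).const_mul _ |>.congr_deriv (mul_one _))).hasDerivWithinAt
  · rw [interior_Ici] at hs
    linarith [hx' s hs.le]

theorem frequently_nonpos_of_solution {t ζ : ℕ → ℝ} {x x' : ℝ → ℝ}
    (ht : Monotone t) (ht_top : Tendsto t atTop atTop) (hζ : ∀ k, t k ≤ ζ k)
    (hx_deriv : ∀ s ∈ Ici (0 : ℝ), HasDerivAt x (x' s) s)
    (hx'_cont : ContinuousOn x' (Ici (0 : ℝ)))
    (hE : ∀ k : ℕ, ∀ s ∈ Ioo (t k) (t (k+1)),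
      HasDerivAt (fun u => Real.exp (-u) * x' u)
        (-(x (ζ k) * Real.exp (s^2 + (x (ζ k))^2))) s) :
    ∃ᶠ s in atTop, x s ≤ 0 := by
  rw [frequently_atTop]
  by_contra! hpos
  obtain ⟨T, hpos⟩ := hpos
  obtain ⟨K, hK⟩ := (ht_top.eventually_ge_atTop (max T 0)).exists
  have hK0 : 0 ≤ t K := (le_max_right _ _).trans hK
  have hKT : T ≤ t K := (le_max_left _ _).trans hK
  have hζK : ∀ k ≥ K, t K ≤ ζ k := fun k hk => (ht hk).trans (hζ k)
  have hx : ∀ s ≥ t K, HasDerivAt x (x' s) s := fun s hs => hx_deriv s (hK0.trans hs)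
  set y : ℝ → ℝ := fun s => Real.exp (-s) * x' s
  have hy_cont : ContinuousOn y (Ici (t K)) :=
    (by fun_prop : Continuous fun s : ℝ => Real.exp (-s)).continuousOn.mul
      (hx'_cont.mono (Ici_subset_Ici.2 hK0))
  have hy_anti : AntitoneOn y (Ici (t K)) :=
    antitoneOn_Ici_of_hasDerivAt_Ioo ht ht_top hy_cont fun k hk s hs =>
      ⟨_, neg_nonpos.2 (mul_pos (hpos _ (hKT.trans (hζK k hk))) (Real.exp_pos _)).le, hE k s hs⟩
  have hx_bot : ¬ Tendsto x atTop atBot := fun h => by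
    obtain ⟨s, hxs, hs⟩ := ((h.eventually_le_atBot 0).and (eventually_ge_atTop T)).exists
    exact hxs.not_gt (hpos s hs)
  have hx'_nonneg : ∀ s ≥ t K, 0 ≤ x' s := fun s hs =>
    not_lt.1 fun hneg => hx_bot (tendsto_atBot_of_antitoneOn_exp_neg_mul_deriv hx hy_anti hs hneg)
  have hx_mono : MonotoneOn x (Ici (t K)) :=
    monotoneOn_of_hasDerivWithinAt_nonneg (convex_Ici _)
      (fun s hs => (hx s hs).continuousAt.continuousWithinAt)
      (fun s hs => (hx s (interior_subset hs)).hasDerivWithinAt)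
      (fun s hs => hx'_nonneg s (interior_subset hs))
  have hy_bot : Tendsto y atTop atBot := by
    refine tendsto_atBot_of_hasDerivAt_Ioo_le_neg ht ht_top (hpos _ hKT) hy_cont
      fun k hk s hs => ⟨_, ?_, hE k s hs⟩
    have hxζ : x (t K) ≤ x (ζ k) := hx_mono self_mem_Ici (hζK k hk) (hζK k hk)
    have hexp : 1 ≤ Real.exp (s ^ 2 + x (ζ k) ^ 2) := Real.one_le_exp (by positivity)
    nlinarith [hpos _ hKT]
  obtain ⟨s, hys, hs⟩ := ((hy_bot.eventually_lt_atBot 0).and (eventually_ge_atTop (t K))).exists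
  exact hys.not_ge (mul_nonneg (Real.exp_pos _).le (hx'_nonneg s hs))

theorem stmt17_general
    (t ζ : ℕ → ℝ) (ht_mono : StrictMono t)
    (ht_top : Tendsto t atTop atTop)
    (hζ : ∀ k : ℕ, ζ k ∈ Icc (t k) (t (k+1)))
    (x x' : ℝ → ℝ)
    (hx_deriv : ∀ s ∈ Ici (0 : ℝ), HasDerivAt x (x' s) s)
    (hx'_cont : ContinuousOn x' (Ici (0 : ℝ)))
    (hE : ∀ k : ℕ, ∀ s ∈ Ioo (t k) (t (k+1)),
      HasDerivAt (fun u => Real.exp (-u) * x' u)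
        (-(x (ζ k) * Real.exp (s^2 + (x (ζ k))^2))) s) :
    ∃ a b : ℕ → ℝ, Tendsto a atTop atTop ∧ Tendsto b atTop atTop ∧
      ∀ n : ℕ, x (a n) ≤ 0 ∧ 0 ≤ x (b n) := by
  have hE_neg : ∀ k : ℕ, ∀ s ∈ Ioo (t k) (t (k+1)),
      HasDerivAt (fun u => Real.exp (-u) * -x' u)
        (-(-x (ζ k) * Real.exp (s^2 + (-x (ζ k))^2))) s := fun k s hs => by
    simpa [mul_neg, neg_sq, Pi.neg_def] using (hE k s hs).neg
  obtain ⟨a, ha, hxa⟩ := exists_seq_forall_of_frequently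
    (frequently_nonpos_of_solution ht_mono.monotone ht_top (fun k => (hζ k).1)
      hx_deriv hx'_cont hE)
  obtain ⟨b, hb, hxb⟩ := exists_seq_forall_of_frequently
    (frequently_nonpos_of_solution (x := -x) ht_mono.monotone ht_top (fun k => (hζ k).1)
      (fun s hs => (hx_deriv s hs).neg) hx'_cont.neg hE_neg)
  exact ⟨a, b, ha, hb, fun n => ⟨hxa n, neg_nonpos.1 (hxb n)⟩⟩

theorem stmt17
    (t ζ : ℕ → ℝ) (ht_mono : StrictMono t) (ht0 : t 0 = 0)
    (ht_top : Tendsto t atTop atTop)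
    (hζ : ∀ k : ℕ, ζ k ∈ Icc (t k) (t (k+1)))
    (x x' : ℝ → ℝ)
    (hx_deriv : ∀ s ∈ Ici (0 : ℝ), HasDerivAt x (x' s) s)
    (hx'_cont : ContinuousOn x' (Ici (0 : ℝ)))
    (hE : ∀ k : ℕ, ∀ s ∈ Ioo (t k) (t (k+1)),
      HasDerivAt (fun u => Real.exp (-u) * x' u)
        (-(x (ζ k) * Real.exp (s^2 + (x (ζ k))^2))) s) :
    ∃ a b : ℕ → ℝ, Tendsto a atTop atTop ∧ Tendsto b atTop atTop ∧
      ∀ n : ℕ, x (a n) ≤ 0 ∧ 0 ≤ x (b n) :=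
  stmt17_general t ζ ht_mono ht_top hζ x x' hx_deriv hx'_cont hE
end
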